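/- Let d ≥ 1. For a finite signed Borel measure ρ on ℝ^d whose total variation has finite first moment, write ∫ f dρ := ∫ f dρ⁺ − ∫ f dρ⁻ via the Jordan decomposition ρ = ρ⁺ − ρ⁻, and define ‖ρ‖_{W₁} := sup { |∫ f dρ| : f : ℝ^d → ℝ is 1-Lipschitz and |f(0)| ≤ 1 }. Let C be the set of such signed measures ρ with ∫ f dρ ≥ 0 for every nonnegative 1-Lipschitz increasing f. Then C has empty interior: for every μ ∈ C and every ε > 0 there exists a finite signed Borel measure ν with finite first moment such that ‖μ − ν‖_{W₁} < ε and ν ∉ C. -/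

import Mathlib

open MeasureTheory

/-- The Euclidean norm on `ℝ^d = Fin d → ℝ`. -/
noncomputable def eucNorm (d : ℕ) (x : Fin d → ℝ) : ℝ :=
  Real.sqrt (∑ i, (x i) ^ 2)

/-- `f` is `1`-Lipschitz for the Euclidean norm on `ℝ^d`. -/
def Lip1 (d : ℕ) (f : (Fin d → ℝ) → ℝ) : Prop :=
  ∀ x y, |f x - f y| ≤ eucNorm d (x - y)

/-- The integral of `f` against a finite signed Borel measure `ρ`, via the Jordan
decomposition `ρ = ρ⁺ − ρ⁻`. -/
noncomputable def signedIntegral {d : ℕ} (ρ : SignedMeasure (Fin d → ℝ))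
    (f : (Fin d → ℝ) → ℝ) : ℝ :=
  ∫ x, f x ∂ρ.toJordanDecomposition.posPart - ∫ x, f x ∂ρ.toJordanDecomposition.negPart

/-- The Kantorovich-type norm `‖ρ‖_{W₁} = sup {|∫ f dρ| : f 1-Lipschitz, |f 0| ≤ 1}`. -/
noncomputable def W1norm {d : ℕ} (ρ : SignedMeasure (Fin d → ℝ)) : ℝ :=
  sSup {r : ℝ | ∃ f : (Fin d → ℝ) → ℝ, Lip1 d f ∧ |f 0| ≤ 1 ∧ r = |signedIntegral ρ f|}

/-- The cone `C` of finite signed Borel measures `ρ` with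
`∫ f dρ ≥ 0` for every nonnegative `1`-Lipschitz increasing `f`. -/
def coneC (d : ℕ) : Set (SignedMeasure (Fin d → ℝ)) :=
  {ρ | ∀ f : (Fin d → ℝ) → ℝ, (∀ x, 0 ≤ f x) → Lip1 d f → Monotone f →
    0 ≤ signedIntegral ρ f}

/-! Moving a small mass `r` from `p = (t + 1) eᵢ` to `q = t eᵢ` changes a measure by at most
`r` in `‖·‖_{W₁}`, since the test functions are `1`-Lipschitz. Against the nonnegative increasing
`1`-Lipschitz ramp `x ↦ (xᵢ - t)⁺` the move costs exactly `r`, while for large `t` the ramp has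
integral less than `r` against `μ⁺`; so the moved measure integrates the ramp to a negative number.
-/

open scoped NNReal
open Filter Topology

namespace MeasureTheory

namespace Measure

variable {α : Type*} [MeasurableSpace α] (A B : Measure α) [IsFiniteMeasure A] [IsFiniteMeasure B]

theorem sub_add_eq_add_sub_swap : A - B + B = A + (B - A) := by
  rw [← toSignedMeasure_eq_toSignedMeasure_iff, toSignedMeasure_add, toSignedMeasure_add,
    ← sub_eq_sub_iff_add_eq_add]
  exact sub_toSignedMeasure_eq_toSignedMeasure_sub.symm

theorem integral_posPart_sub_integral_negPart_toSignedMeasure_sub {f : α → ℝ}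
    (hA : Integrable f A) (hB : Integrable f B) :
    let j := (A.toSignedMeasure - B.toSignedMeasure).toJordanDecomposition
    ∫ x, f x ∂j.posPart - ∫ x, f x ∂j.negPart = ∫ x, f x ∂A - ∫ x, f x ∂B := by
  have key := congrArg (fun m : Measure α => ∫ x, f x ∂m) (sub_add_eq_add_sub_swap A B)
  simp only [integral_add_measure (hA.mono_measure sub_le) hB,
    integral_add_measure hA (hB.mono_measure sub_le)] at key
  simp only [toJordanDecomposition_toSignedMeasure_sub,
    jordanDecompositionOfToSignedMeasureSub_posPart,
    jordanDecompositionOfToSignedMeasureSub_negPart]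
  linarith

theorem integrable_totalVariation_toSignedMeasure_sub {f : α → ℝ}
    (hA : Integrable f A) (hB : Integrable f B) :
    Integrable f (A.toSignedMeasure - B.toSignedMeasure).totalVariation := by
  refine (integrable_add_measure.mpr ⟨hA, hB⟩).mono_measure ?_
  rw [SignedMeasure.totalVariation, toJordanDecomposition_toSignedMeasure_sub]
  exact add_le_add sub_le sub_le

end Measure

theorem integrable_smul_dirac {α : Type*} [MeasurableSpace α] [MeasurableSingletonClass α]
    (f : α → ℝ) (r : ℝ≥0) (a : α) : Integrable f (r • Measure.dirac a) :=
  (integrable_dirac enorm_lt_top).smul_measure_nnreal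

theorem integral_smul_dirac {α : Type*} [MeasurableSpace α] [MeasurableSingletonClass α]
    (f : α → ℝ) (r : ℝ≥0) (a : α) : ∫ x, f x ∂(r • Measure.dirac a) = r * f a := by
  rw [integral_smul_nnreal_measure, integral_dirac, NNReal.smul_def, smul_eq_mul]

theorem tendsto_integral_max_sub_atTop {α : Type*} [MeasurableSpace α] {P : Measure α}
    {g : α → ℝ} (hg : Integrable g P) :
    Tendsto (fun t : ℝ => ∫ x, max (g x - t) 0 ∂P) atTop (𝓝 0) := by
  have hlim : ∀ x, Tendsto (fun t : ℝ => max (g x - t) 0) atTop (𝓝 0) := fun x =>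
    tendsto_const_nhds.congr' <| (eventually_ge_atTop (g x)).mono fun t ht =>
      (max_eq_right (sub_nonpos.mpr ht)).symm
  have hbound : ∀ᶠ t : ℝ in atTop, ∀ᵐ x ∂P, ‖max (g x - t) 0‖ ≤ |g x| :=
    (eventually_ge_atTop 0).mono fun t ht => ae_of_all _ fun x => by
      rw [Real.norm_of_nonneg (le_max_right _ _)]
      exact max_le (by linarith [le_abs_self (g x)]) (abs_nonneg _)
  simpa using tendsto_integral_filter_of_dominated_convergence (fun x => |g x|)
    (Eventually.of_forall fun t =>
      (hg.aestronglyMeasurable.sub aestronglyMeasurable_const).sup aestronglyMeasurable_const)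
    hbound hg.abs (ae_of_all _ hlim)

namespace SignedMeasure

variable {α : Type*} [MeasurableSpace α]

/-- `μ + r (δ_q - δ_p)`, written as a difference of two finite measures so that its Jordan
decomposition is controlled by `Measure.toJordanDecomposition_toSignedMeasure_sub`. -/
noncomputable def transferMass (μ : SignedMeasure α) (r : ℝ≥0) (p q : α) : SignedMeasure α :=
  (μ.toJordanDecomposition.posPart + r • Measure.dirac q).toSignedMeasure -
    (μ.toJordanDecomposition.negPart + r • Measure.dirac p).toSignedMeasure

variable (μ : SignedMeasure α) (r : ℝ≥0) (p q : α)

theorem sub_transferMass :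
    μ - μ.transferMass r p q =
      (r • Measure.dirac p).toSignedMeasure - (r • Measure.dirac q).toSignedMeasure := by
  have hμ : μ.toJordanDecomposition.posPart.toSignedMeasure -
      μ.toJordanDecomposition.negPart.toSignedMeasure = μ :=
    μ.toSignedMeasure_toJordanDecomposition
  nth_rw 1 [← hμ]
  simp only [transferMass, Measure.toSignedMeasure_add]
  abel

theorem integrable_totalVariation_transferMass [MeasurableSingletonClass α] {f : α → ℝ}
    (hf : Integrable f μ.totalVariation) : Integrable f (μ.transferMass r p q).totalVariation :=
  Measure.integrable_totalVariation_toSignedMeasure_sub _ _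
    ((hf.mono_measure (Measure.le_add_right le_rfl)).add_measure (integrable_smul_dirac f r q))
    ((hf.mono_measure (Measure.le_add_left le_rfl)).add_measure (integrable_smul_dirac f r p))

end SignedMeasure

end MeasureTheory

open MeasureTheory SignedMeasure

section Euclidean

variable {d : ℕ}

theorem eucNorm_nonneg (x : Fin d → ℝ) : 0 ≤ eucNorm d x := Real.sqrt_nonneg _

theorem abs_apply_le_eucNorm (x : Fin d → ℝ) (i : Fin d) : |x i| ≤ eucNorm d x := by
  rw [eucNorm, ← Real.sqrt_sq_eq_abs]
  exact Real.sqrt_le_sqrt (Finset.single_le_sum (fun j _ => sq_nonneg (x j)) (Finset.mem_univ i))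

theorem eucNorm_single (i : Fin d) (a : ℝ) : eucNorm d (Pi.single i a) = |a| := by
  simp [eucNorm, Pi.single_apply, Real.sqrt_sq_eq_abs]

theorem lip1_max_apply_sub (i : Fin d) (t : ℝ) : Lip1 d fun x => max (x i - t) 0 := fun x y =>
  calc |max (x i - t) 0 - max (y i - t) 0| ≤ |x i - t - (y i - t)| :=
        abs_max_sub_max_le_abs _ _ _
    _ = |(x - y) i| := by rw [sub_sub_sub_cancel_right, Pi.sub_apply]
    _ ≤ eucNorm d (x - y) := abs_apply_le_eucNorm _ _

theorem monotone_max_apply_sub (i : Fin d) (t : ℝ) :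
    Monotone fun x : Fin d → ℝ => max (x i - t) 0 :=
  fun _ _ hxy => max_le_max_right 0 (sub_le_sub_right (hxy i) t)

theorem integrable_apply_of_eucNorm {P : Measure (Fin d → ℝ)}
    (hP : Integrable (fun x => eucNorm d x) P) (i : Fin d) : Integrable (fun x => x i) P :=
  hP.mono (continuous_apply i).aestronglyMeasurable <| ae_of_all _ fun x => by
    rw [Real.norm_eq_abs, Real.norm_of_nonneg (eucNorm_nonneg x)]
    exact abs_apply_le_eucNorm x i

theorem integrable_max_apply_sub {P : Measure (Fin d → ℝ)} [IsFiniteMeasure P]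
    (hP : Integrable (fun x => eucNorm d x) P) (i : Fin d) (t : ℝ) :
    Integrable (fun x => max (x i - t) 0) P :=
  ((integrable_apply_of_eucNorm hP i).sub (integrable_const t)).sup (integrable_const 0)

theorem signedIntegral_toSignedMeasure_sub (A B : Measure (Fin d → ℝ)) [IsFiniteMeasure A]
    [IsFiniteMeasure B] {f : (Fin d → ℝ) → ℝ} (hA : Integrable f A) (hB : Integrable f B) :
    signedIntegral (A.toSignedMeasure - B.toSignedMeasure) f = ∫ x, f x ∂A - ∫ x, f x ∂B :=
  Measure.integral_posPart_sub_integral_negPart_toSignedMeasure_sub A B hA hB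

theorem signedIntegral_transferMass (μ : SignedMeasure (Fin d → ℝ)) (r : ℝ≥0) (p q : Fin d → ℝ)
    {f : (Fin d → ℝ) → ℝ} (hP : Integrable f μ.toJordanDecomposition.posPart)
    (hN : Integrable f μ.toJordanDecomposition.negPart) :
    signedIntegral (μ.transferMass r p q) f = signedIntegral μ f + r * (f q - f p) := by
  rw [transferMass, signedIntegral_toSignedMeasure_sub _ _
      (hP.add_measure (integrable_smul_dirac f r q)) (hN.add_measure (integrable_smul_dirac f r p)),
    integral_add_measure hP (integrable_smul_dirac f r q),
    integral_add_measure hN (integrable_smul_dirac f r p),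
    integral_smul_dirac, integral_smul_dirac, signedIntegral]
  ring

theorem W1norm_sub_transferMass_le (μ : SignedMeasure (Fin d → ℝ)) (r : ℝ≥0)
    (p q : Fin d → ℝ) : W1norm (μ - μ.transferMass r p q) ≤ r * eucNorm d (p - q) := by
  refine Real.sSup_le ?_ (mul_nonneg r.coe_nonneg (eucNorm_nonneg _))
  rintro _ ⟨f, hf, -, rfl⟩
  rw [sub_transferMass, signedIntegral_toSignedMeasure_sub _ _ (integrable_smul_dirac f r p)
      (integrable_smul_dirac f r q),
    integral_smul_dirac, integral_smul_dirac, ← mul_sub, abs_mul, NNReal.abs_eq]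
  exact mul_le_mul_of_nonneg_left (hf p q) r.coe_nonneg

end Euclidean

theorem cone_has_empty_interior_general
    (d : ℕ) (hd : 1 ≤ d)
    (μ : SignedMeasure (Fin d → ℝ))
    (hμ_mom : Integrable (fun x => eucNorm d x) μ.totalVariation)
    (ε : ℝ) (hε : 0 < ε) :
    ∃ ν : SignedMeasure (Fin d → ℝ),
      Integrable (fun x => eucNorm d x) ν.totalVariation ∧
      W1norm (μ - ν) < ε ∧ ν ∉ coneC d := by
  have hP := hμ_mom.mono_measure (Measure.le_add_right le_rfl)
  have hN := hμ_mom.mono_measure (Measure.le_add_left le_rfl)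
  let i : Fin d := ⟨0, hd⟩
  let r : ℝ≥0 := ⟨ε / 2, (half_pos hε).le⟩
  obtain ⟨t, ht⟩ : ∃ t : ℝ, ∫ x, max (x i - t) 0 ∂μ.toJordanDecomposition.posPart < r :=
    ((tendsto_integral_max_sub_atTop (integrable_apply_of_eucNorm hP i)).eventually
      (eventually_lt_nhds (half_pos hε))).exists
  refine ⟨μ.transferMass r (Pi.single i (t + 1)) (Pi.single i t),
    integrable_totalVariation_transferMass μ r _ _ hμ_mom, ?_, fun hν => ?_⟩
  · calc W1norm _ ≤ r * eucNorm d (Pi.single i (t + 1) - Pi.single i t) :=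
          W1norm_sub_transferMass_le μ r _ _
      _ = ε / 2 := by
        rw [← Pi.single_sub, add_sub_cancel_left, eucNorm_single, abs_one, mul_one]; rfl
      _ < ε := half_lt_self hε
  · have hramp := hν _ (fun x => le_max_right _ 0) (lip1_max_apply_sub i t)
      (monotone_max_apply_sub i t)
    have hN_ramp : 0 ≤ ∫ x, max (x i - t) 0 ∂μ.toJordanDecomposition.negPart :=
      integral_nonneg fun x => le_max_right _ 0
    rw [signedIntegral_transferMass μ r _ _ (integrable_max_apply_sub hP i t)
      (integrable_max_apply_sub hN i t), signedIntegral] at hramp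
    simp only [Pi.single_eq_same, sub_self, max_self, add_sub_cancel_left,
      max_eq_left zero_le_one, zero_sub] at hramp
    linarith

/-- The cone `C` has empty interior in the Kantorovich-type norm `‖·‖_{W₁}`: every
`μ ∈ C` with finite first moment is approximated arbitrarily well by signed measures
with finite first moments lying outside `C`. -/
theorem cone_has_empty_interior
    (d : ℕ) (hd : 1 ≤ d)
    (μ : SignedMeasure (Fin d → ℝ)) (hμC : μ ∈ coneC d)
    (hμ_mom : Integrable (fun x => eucNorm d x) μ.totalVariation)
    (ε : ℝ) (hε : 0 < ε) :
    ∃ ν : SignedMeasure (Fin d → ℝ),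
      Integrable (fun x => eucNorm d x) ν.totalVariation ∧
      W1norm (μ - ν) < ε ∧ ν ∉ coneC d :=
  cone_has_empty_interior_general d hd μ hμ_mom ε hε
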